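/- Fix 0 < p < ∞ and 0 < c < 1. Let f be an inner function with log|f'| ∈ L^p(𝕋), where |f'(ξ)| is the angular derivative. Then ∫_{{z ∈ 𝔻 : |f(z)| < c}} |log(1-|z|)|^{p-1}/(1-|z|) dA(z) < ∞. -/

import Mathlib

open Complex MeasureTheory Metric Set Filter
open scoped ENNReal

/-- The hyperbolic derivative of `f` at `z`. -/
noncomputable def hypDeriv (f : ℂ → ℂ) (z : ℂ) : ℝ :=
  (1 - ‖z‖ ^ 2) * ‖deriv f z‖ / (1 - ‖f z‖ ^ 2)

/-- The point `e^{iθ}` of the unit circle. -/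
noncomputable def circlePoint (θ : ℝ) : ℂ := Complex.exp (θ * Complex.I)

/-- Normalized Lebesgue measure on the unit circle, via the parametrization `θ ↦ e^{iθ}`,
`θ ∈ (0, 2π]`. -/
noncomputable def mT : Measure ℝ :=
  (ENNReal.ofReal (2 * Real.pi))⁻¹ • (volume.restrict (Ioc (0:ℝ) (2 * Real.pi)))

/-- `f` is an inner function: a holomorphic self-map of the unit disc whose radial limits have
modulus one almost everywhere on the circle. -/
def IsInner (f : ℂ → ℂ) : Prop :=
  DifferentiableOn ℂ f (ball (0:ℂ) 1) ∧ (∀ z ∈ ball (0:ℂ) 1, f z ∈ ball (0:ℂ) 1) ∧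
    ∀ᵐ θ ∂mT, Tendsto (fun r : ℝ => ‖f ((r:ℂ) * circlePoint θ)‖)
      (nhdsWithin 1 (Iio 1)) (nhds 1)

/-- `f` has (finite) angular derivative of modulus `L` at the boundary point `ξ`. -/
def HasAngularDeriv (f : ℂ → ℂ) (ξ : ℂ) (L : ℝ) : Prop :=
  Tendsto (fun r : ℝ => (1 - ‖f ((r:ℂ) * ξ)‖) / (1 - r))
    (nhdsWithin 1 (Iio 1)) (nhds L)

/-- The accumulated Möbius distortion `A(f)(ξ) = ∫₀¹ (1 - D_h f(rξ)) ⬝ 2/(1-r²) dr`. -/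
noncomputable def accumDistortion (f : ℂ → ℂ) (ξ : ℂ) : ℝ≥0∞ :=
  ∫⁻ r in Ioo (0:ℝ) 1, ENNReal.ofReal ((1 - hypDeriv f ((r:ℂ) * ξ)) * (2 / (1 - r ^ 2)))

/-! ### Auxiliary lemmas -/

section Aux

open Real

noncomputable def mob (a z : ℂ) : ℂ := (a - z) / (1 - (starRingEnd ℂ) a * z)

lemma mob_denom_ne {a z : ℂ} (ha : ‖a‖ < 1) (hz : ‖z‖ < 1) :
    (1 : ℂ) - (starRingEnd ℂ) a * z ≠ 0 := by
  intro h
  have h1 : (starRingEnd ℂ) a * z = 1 := by linear_combination -h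
  have : ‖(starRingEnd ℂ) a * z‖ = 1 := by rw [h1]; simp
  rw [norm_mul, Complex.norm_conj] at this
  nlinarith [norm_nonneg a, norm_nonneg z]

lemma normSq_sub_expand (a z : ℂ) : Complex.normSq (a - z)
    = Complex.normSq a + Complex.normSq z - 2 * ((starRingEnd ℂ) a * z).re := by
  simp [Complex.normSq_apply, Complex.sub_re, Complex.sub_im, Complex.mul_re, Complex.mul_im,
    Complex.conj_re, Complex.conj_im]
  ring

lemma normSq_one_sub_expand (a z : ℂ) : Complex.normSq (1 - (starRingEnd ℂ) a * z)
    = 1 + Complex.normSq a * Complex.normSq z - 2 * ((starRingEnd ℂ) a * z).re := by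
  simp [Complex.normSq_apply, Complex.sub_re, Complex.sub_im, Complex.mul_re, Complex.mul_im,
    Complex.conj_re, Complex.conj_im]
  ring

lemma mob_normSq_lt {a z : ℂ} (ha : ‖a‖ < 1) (hz : ‖z‖ < 1) :
    Complex.normSq (a - z) < Complex.normSq (1 - (starRingEnd ℂ) a * z) := by
  rw [normSq_sub_expand, normSq_one_sub_expand]
  have hna : Complex.normSq a < 1 := by
    have := Complex.sq_norm a; nlinarith [norm_nonneg a]
  have hnz : Complex.normSq z < 1 := by
    have := Complex.sq_norm z; nlinarith [norm_nonneg z]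
  nlinarith [Complex.normSq_nonneg a, Complex.normSq_nonneg z]

lemma mob_lt_one {a z : ℂ} (ha : ‖a‖ < 1) (hz : ‖z‖ < 1) :
    ‖mob a z‖ < 1 := by
  have hd := mob_denom_ne ha hz
  have h := mob_normSq_lt ha hz
  rw [← Complex.sq_norm, ← Complex.sq_norm] at h
  have habs : ‖a - z‖ < ‖1 - (starRingEnd ℂ) a * z‖ := by
    nlinarith [norm_nonneg (a - z), norm_nonneg (1 - (starRingEnd ℂ) a * z)]
  rw [mob, norm_div, div_lt_one]
  · exact habs
  · exact (norm_pos_iff.2 hd)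

lemma mob_mob {a z : ℂ} (ha : ‖a‖ < 1) (hz : ‖z‖ < 1) :
    mob a (mob a z) = z := by
  have h1 : (1 : ℂ) - (starRingEnd ℂ) a * z ≠ 0 := mob_denom_ne ha hz
  have h2 : (1 : ℂ) - (starRingEnd ℂ) a * mob a z ≠ 0 := mob_denom_ne ha (mob_lt_one ha hz)
  have ha' : (1:ℂ) - (starRingEnd ℂ) a * a ≠ 0 := by
    intro h
    rw [Complex.conj_mul'] at h
    have h3 : ((‖a‖ ^ 2 : ℝ) : ℂ) = 1 := by push_cast; linear_combination -h
    have h4 : ‖a‖ ^ 2 = 1 := by exact_mod_cast h3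
    nlinarith [norm_nonneg a]
  have e1 : a - (a - z) / (1 - (starRingEnd ℂ) a * z)
      = z * (1 - (starRingEnd ℂ) a * a) / (1 - (starRingEnd ℂ) a * z) := by
    rw [eq_div_iff h1, sub_mul, div_mul_cancel₀ _ h1]; ring
  have e2 : 1 - (starRingEnd ℂ) a * ((a - z) / (1 - (starRingEnd ℂ) a * z))
      = (1 - (starRingEnd ℂ) a * a) / (1 - (starRingEnd ℂ) a * z) := by
    rw [eq_div_iff h1, sub_mul, mul_assoc, div_mul_cancel₀ _ h1]; ring
  rw [mob, mob, e1, e2, div_div_div_cancel_right₀ h1]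
  exact mul_div_cancel_right₀ z ha'

lemma mob_differentiableOn (a : ℂ) (ha : ‖a‖ < 1) :
    DifferentiableOn ℂ (mob a) (ball (0:ℂ) 1) := by
  apply DifferentiableOn.div
  · exact (differentiable_const a).differentiableOn.sub differentiableOn_id
  · exact (differentiable_const (1:ℂ)).differentiableOn.sub
      ((differentiable_const _).differentiableOn.mul differentiableOn_id)
  · intro z hz
    exact mob_denom_ne ha (by simpa [mem_ball, dist_eq_norm] using hz)

lemma schwarz_pick {f : ℂ → ℂ} (hd : DifferentiableOn ℂ f (ball (0:ℂ) 1))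
    (hm : MapsTo f (ball (0:ℂ) 1) (ball (0:ℂ) 1)) {z w : ℂ}
    (hz : ‖z‖ < 1) (hw : ‖w‖ < 1) :
    ‖mob (f w) (f z)‖ ≤ ‖mob w z‖ := by
  have hball : ∀ {x : ℂ}, ‖x‖ < 1 ↔ x ∈ ball (0:ℂ) 1 := by
    intro x; simp [mem_ball, dist_eq_norm]
  have hfw : ‖f w‖ < 1 := hball.2 (hm (hball.1 hw))
  set g : ℂ → ℂ := fun u => mob (f w) (f (mob w u)) with hg
  have hmobw : MapsTo (mob w) (ball (0:ℂ) 1) (ball (0:ℂ) 1) := fun u hu =>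
    hball.1 (mob_lt_one hw (hball.2 hu))
  have hgd : DifferentiableOn ℂ g (ball (0:ℂ) 1) :=
    ((mob_differentiableOn (f w) hfw).comp (hd.comp (mob_differentiableOn w hw) hmobw)
      (hm.comp hmobw))
  have hgm : MapsTo g (ball (0:ℂ) 1) (ball (0:ℂ) 1) := by
    intro u hu
    exact hball.1 (mob_lt_one hfw (hball.2 (hm (hmobw hu))))
  have hg0 : g 0 = 0 := by
    have : mob w 0 = w := by simp [mob]
    simp [hg, this, mob]
  have hu : ‖mob w z‖ < 1 := mob_lt_one hw hz
  have := Complex.norm_le_norm_of_mapsTo_ball_self hgd (hgm.mono_right ball_subset_closedBall) hg0 hu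
  have hgu : g (mob w z) = mob (f w) (f z) := by
    rw [hg]; simp only []
    rw [mob_mob hw hz]
  rwa [hgu] at this

/-- pseudo-hyperbolic triangle inequality against the origin -/
lemma abs_sub_abs_mul_le {a b : ℂ} (ha : ‖a‖ < 1) (hb : ‖b‖ < 1) :
    (‖a‖ - ‖b‖) * ‖1 - (starRingEnd ℂ) a * b‖
      ≤ ‖a - b‖ * (1 - ‖a‖ * ‖b‖) := by
  set A := ‖a‖ with hA
  set B := ‖b‖ with hB
  have hA0 : 0 ≤ A := norm_nonneg a
  have hB0 : 0 ≤ B := norm_nonneg b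
  rcases le_or_gt A B with h | h
  · have h1 : (A - B) * ‖1 - (starRingEnd ℂ) a * b‖ ≤ 0 :=
      mul_nonpos_of_nonpos_of_nonneg (by linarith) (norm_nonneg _)
    have h2 : 0 ≤ ‖a - b‖ * (1 - A * B) :=
      mul_nonneg (norm_nonneg _) (by nlinarith)
    linarith
  · have hx : ((starRingEnd ℂ) a * b).re ≤ A * B := by
      calc ((starRingEnd ℂ) a * b).re ≤ ‖(starRingEnd ℂ) a * b‖ := Complex.re_le_norm _
        _ = A * B := by rw [norm_mul, Complex.norm_conj]
    have e1 : ‖a - b‖ ^ 2 = A ^ 2 + B ^ 2 - 2 * ((starRingEnd ℂ) a * b).re := by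
      rw [Complex.sq_norm, normSq_sub_expand, ← Complex.sq_norm, ← Complex.sq_norm]
    have e2 : ‖1 - (starRingEnd ℂ) a * b‖ ^ 2
        = 1 + A ^ 2 * B ^ 2 - 2 * ((starRingEnd ℂ) a * b).re := by
      rw [Complex.sq_norm, normSq_one_sub_expand, ← Complex.sq_norm, ← Complex.sq_norm]
    have hsq : ((A - B) * ‖1 - (starRingEnd ℂ) a * b‖) ^ 2
        ≤ (‖a - b‖ * (1 - A * B)) ^ 2 := by
      have key : 0 ≤ (1 - A*B)^2 - (A-B)^2 := by
        nlinarith [mul_nonneg (mul_nonneg (mul_nonneg (sub_nonneg.2 ha.le)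
          (by linarith : (0:ℝ) ≤ 1 + B)) (by linarith : (0:ℝ) ≤ 1 + A)) (sub_nonneg.2 hb.le)]
      have expand : (‖a - b‖ * (1 - A * B)) ^ 2
          - ((A - B) * ‖1 - (starRingEnd ℂ) a * b‖) ^ 2
          = 2 * (A*B - ((starRingEnd ℂ) a * b).re) * ((1 - A*B)^2 - (A-B)^2) := by
        rw [mul_pow, mul_pow, e1, e2]; ring
      nlinarith [mul_nonneg (mul_nonneg (by norm_num : (0:ℝ) ≤ 2) (sub_nonneg.2 hx)) key]
    have hr : 0 ≤ ‖a - b‖ * (1 - A * B) :=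
      mul_nonneg (norm_nonneg _) (by nlinarith)
    nlinarith [mul_nonneg (sub_nonneg.2 h.le) (norm_nonneg (1 - (starRingEnd ℂ) a * b))]

/-- the radial two-point estimate -/
lemma radial_est {f : ℂ → ℂ} (hd : DifferentiableOn ℂ f (ball (0:ℂ) 1))
    (hm : MapsTo f (ball (0:ℂ) 1) (ball (0:ℂ) 1)) {ξ : ℂ} (hξ : ‖ξ‖ = 1)
    {r s : ℝ} (h0r : 0 ≤ r) (hrs : r ≤ s) (hs1 : s < 1) :
    (1 - s) * (1 - ‖f ((r:ℂ) * ξ)‖) ≤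
      2 * (1 - r) * (1 - ‖f ((s:ℂ) * ξ)‖) := by
  have hzr : ‖(r:ℂ) * ξ‖ < 1 := by
    rw [norm_mul, hξ, mul_one, Complex.norm_real, Real.norm_eq_abs, _root_.abs_of_nonneg h0r]; linarith
  have hzs : ‖(s:ℂ) * ξ‖ < 1 := by
    rw [norm_mul, hξ, mul_one, Complex.norm_real, Real.norm_eq_abs,
      _root_.abs_of_nonneg (by linarith : (0:ℝ) ≤ s)]; linarith
  have hball : ∀ {x : ℂ}, ‖x‖ < 1 ↔ x ∈ ball (0:ℂ) 1 := by
    intro x; simp [mem_ball, dist_eq_norm]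
  set b := f ((r:ℂ) * ξ) with hbdef
  set a := f ((s:ℂ) * ξ) with hadef
  have hha : ‖a‖ < 1 := hball.2 (hm (hball.1 hzs))
  have hhb : ‖b‖ < 1 := hball.2 (hm (hball.1 hzr))
  set A := ‖a‖
  set B := ‖b‖
  have hA0 : 0 ≤ A := norm_nonneg a
  have hB0 : 0 ≤ B := norm_nonneg b
  have hconj : (starRingEnd ℂ) ((s:ℂ) * ξ) * ((r:ℂ) * ξ) = ((s*r : ℝ) : ℂ) := by
    have hξ1 : (starRingEnd ℂ) ξ * ξ = 1 := by
      have := Complex.mul_conj ξ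
      rw [mul_comm] at this
      rw [this, Complex.normSq_eq_norm_sq, hξ]; norm_num
    push_cast
    calc (starRingEnd ℂ) ((s:ℂ) * ξ) * ((r:ℂ) * ξ)
        = (s:ℂ) * (r:ℂ) * ((starRingEnd ℂ) ξ * ξ) := by
          rw [map_mul]; simp [Complex.conj_ofReal]; ring
      _ = (s:ℂ) * (r:ℂ) := by rw [hξ1, mul_one]
  have hden : (0:ℝ) < 1 - s*r := by nlinarith
  have hmw : ‖mob ((s:ℂ)*ξ) ((r:ℂ)*ξ)‖ = (s - r) / (1 - s*r) := by
    rw [mob, norm_div, hconj]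
    have h1 : (s:ℂ)*ξ - (r:ℂ)*ξ = ((s - r : ℝ):ℂ) * ξ := by push_cast; ring
    have h2 : (1:ℂ) - ((s*r:ℝ):ℂ) = ((1 - s*r : ℝ):ℂ) := by push_cast; ring
    rw [h1, h2, norm_mul, hξ, mul_one, Complex.norm_real, Real.norm_eq_abs, Complex.norm_real, Real.norm_eq_abs,
      _root_.abs_of_nonneg (by linarith : (0:ℝ) ≤ s - r),
      _root_.abs_of_nonneg (by nlinarith : (0:ℝ) ≤ 1 - s*r)]
  have hsp := schwarz_pick hd hm hzr hzs
  rw [hmw] at hsp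
  set t := (s - r) / (1 - s*r) with ht
  have ht0 : 0 ≤ t := div_nonneg (by linarith) hden.le
  have ht1' : (1 - s) * (1 + r) = (1 - s*r) * (1 - t) := by
    rw [ht]; field_simp; ring
  have ht2' : (1 + s) * (1 - r) = (1 - s*r) * (1 + t) := by
    rw [ht]; field_simp; ring
  have ht1 : t < 1 := by nlinarith
  have hdenab : (0:ℝ) < ‖1 - (starRingEnd ℂ) a * b‖ :=
    norm_pos_iff.2 (mob_denom_ne hha hhb)
  have htri := abs_sub_abs_mul_le hha hhb
  have hmab : ‖a - b‖ ≤ t * ‖1 - (starRingEnd ℂ) a * b‖ := by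
    have : ‖mob a b‖ ≤ t := hsp
    rw [mob, norm_div, div_le_iff₀ hdenab] at this
    exact this
  have hAB : A - B ≤ t * (1 - A*B) := by
    have h1 : (A - B) * ‖1 - (starRingEnd ℂ) a * b‖
        ≤ t * ‖1 - (starRingEnd ℂ) a * b‖ * (1 - A*B) := by
      calc (A - B) * ‖1 - (starRingEnd ℂ) a * b‖
          ≤ ‖a - b‖ * (1 - A * B) := htri
        _ ≤ t * ‖1 - (starRingEnd ℂ) a * b‖ * (1 - A*B) := by
            apply mul_le_mul_of_nonneg_right hmab (by nlinarith)
    have := (mul_le_mul_iff_of_pos_right hdenab).1 (by linarith [h1] :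
      (A - B) * ‖1 - (starRingEnd ℂ) a * b‖
        ≤ (t * (1 - A*B)) * ‖1 - (starRingEnd ℂ) a * b‖)
    exact this
  have hstep : (1 - t) * (1 - B) ≤ (1 + t) * (1 - A) := by
    nlinarith [hAB, mul_nonneg ht0 (mul_nonneg (sub_nonneg.2 hha.le) (sub_nonneg.2 hhb.le))]
  have h2 : (1 - s) * (1 + r) * (1 - B) ≤ (1 + s) * (1 - r) * (1 - A) := by
    calc (1 - s) * (1 + r) * (1 - B) = (1 - s*r) * ((1 - t) * (1 - B)) := by rw [ht1']; ring
      _ ≤ (1 - s*r) * ((1 + t) * (1 - A)) := mul_le_mul_of_nonneg_left hstep hden.le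
      _ = (1 + s) * (1 - r) * (1 - A) := by rw [← mul_assoc, ← ht2']
  have e3 : 0 ≤ (1 - s) * (1 - B) * r :=
    mul_nonneg (mul_nonneg (by linarith) (by linarith)) h0r
  have e4 : 0 ≤ (1 - s) * ((1 - r) * (1 - A)) :=
    mul_nonneg (by linarith) (mul_nonneg (by linarith) (by linarith))
  nlinarith [h2, e3, e4]

lemma angular_bound {f : ℂ → ℂ} (hd : DifferentiableOn ℂ f (ball (0:ℂ) 1))
    (hm : MapsTo f (ball (0:ℂ) 1) (ball (0:ℂ) 1)) {ξ : ℂ} {L : ℝ}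
    (hξ : ‖ξ‖ = 1) (hL : HasAngularDeriv f ξ L) {r : ℝ}
    (h0 : 0 ≤ r) (h1 : r < 1) :
    1 - ‖f ((r:ℂ) * ξ)‖ ≤ 2 * (1 - r) * L := by
  have htend : Tendsto (fun s : ℝ => 2 * (1 - r) *
      ((1 - ‖f ((s:ℂ) * ξ)‖) / (1 - s)))
      (nhdsWithin 1 (Iio 1)) (nhds (2 * (1-r) * L)) := hL.const_mul _
  refine ge_of_tendsto htend ?_
  filter_upwards [mem_nhdsWithin_of_mem_nhds (isOpen_Ioi.mem_nhds h1), self_mem_nhdsWithin]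
    with s hs hs1
  have hs1' : s < 1 := hs1
  have hs0 : (0:ℝ) < 1 - s := by linarith
  have est := radial_est hd hm hξ h0 (le_of_lt hs) hs1'
  have h' : 1 - ‖f ((r:ℂ) * ξ)‖
      ≤ (2 * (1-r) * (1 - ‖f ((s:ℂ) * ξ)‖)) / (1-s) := by
    rw [le_div_iff₀ hs0]; linarith [est]
  calc 1 - ‖f ((r:ℂ) * ξ)‖
      ≤ (2 * (1-r) * (1 - ‖f ((s:ℂ) * ξ)‖)) / (1-s) := h'
    _ = 2 * (1-r) * ((1 - ‖f ((s:ℂ) * ξ)‖) / (1-s)) := by ring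

lemma L1 (p : ℝ) (hp : 0 < p) {δ : ℝ} (h0 : 0 < δ) (h1 : δ < 1) :
    ∫⁻ r in Ioo (0:ℝ) (1-δ), ENNReal.ofReal (|Real.log (1-r)|^(p-1) / (1-r))
      ≤ ENNReal.ofReal ((Real.log δ⁻¹)^p / p) := by
  have h1δ : (1:ℝ) < δ⁻¹ := by nlinarith [mul_inv_cancel₀ (ne_of_gt h0), inv_pos.2 h0]
  set T := Real.log δ⁻¹ with hT
  have hT0 : 0 < T := Real.log_pos h1δ
  set φ : ℝ → ℝ := fun u => 1 - Real.exp (-u) with hφ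
  have heT : Real.exp (-T) = δ := by
    rw [hT, Real.log_inv, neg_neg, Real.exp_log h0]
  have himg : φ '' Ioo 0 T = Ioo 0 (1-δ) := by
    ext r
    constructor
    · rintro ⟨u, ⟨hu0, huT⟩, rfl⟩
      constructor
      · have : Real.exp (-u) < 1 := by
          rw [Real.exp_lt_one_iff]; linarith
        simp only [hφ]; linarith
      · have h2 : Real.exp (-T) < Real.exp (-u) := Real.exp_lt_exp.2 (by linarith)
        rw [heT] at h2
        simp only [hφ]; linarith
    · rintro ⟨hr0, hr1⟩
      refine ⟨-Real.log (1-r), ⟨?_, ?_⟩, ?_⟩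
      · have : Real.log (1-r) < 0 := Real.log_neg (by linarith) (by linarith)
        linarith
      · have : Real.log δ < Real.log (1-r) := Real.log_lt_log h0 (by linarith)
        rw [hT, Real.log_inv]; linarith
      · simp only [hφ, neg_neg]
        rw [Real.exp_log (by linarith : (0:ℝ) < 1-r)]; ring
  set f' : ℝ → ℝ →L[ℝ] ℝ := fun x =>
    ContinuousLinearMap.smulRight (1 : ℝ →L[ℝ] ℝ) (Real.exp (-x)) with hf'
  have hderiv : ∀ x ∈ Ioo (0:ℝ) T, HasFDerivWithinAt φ (f' x) (Ioo (0:ℝ) T) x := by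
    intro x _
    have h1' : HasDerivAt (fun u : ℝ => Real.exp (-u)) (-Real.exp (-x)) x := by
      simpa using (hasDerivAt_neg x).exp
    have h2' : HasDerivAt φ (Real.exp (-x)) x := by
      simpa [hφ] using h1'.const_sub 1
    exact h2'.hasDerivWithinAt.hasFDerivWithinAt
  have hmono : StrictMono φ := by
    intro a b hab
    have := Real.exp_lt_exp.2 (neg_lt_neg hab)
    simp only [hφ]; linarith
  have hinj : InjOn φ (Ioo (0:ℝ) T) := hmono.injective.injOn
  calc ∫⁻ r in Ioo (0:ℝ) (1-δ), ENNReal.ofReal (|Real.log (1-r)|^(p-1) / (1-r))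
      = ∫⁻ x in Ioo (0:ℝ) T, ENNReal.ofReal |(f' x).det|
          * ENNReal.ofReal (|Real.log (1-φ x)|^(p-1) / (1-φ x)) := by
        rw [← himg, lintegral_image_eq_lintegral_abs_det_fderiv_mul volume
          measurableSet_Ioo hderiv hinj]
    _ = ∫⁻ x in Ioo (0:ℝ) T, ENNReal.ofReal (x^(p-1)) := by
        apply setLIntegral_congr_fun measurableSet_Ioo
        intro x hx
        have hdet : (f' x).det = Real.exp (-x) := ContinuousLinearMap.det_toSpanSingleton _
        have h1φ : 1 - φ x = Real.exp (-x) := by simp [hφ]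
        beta_reduce
        rw [hdet, _root_.abs_of_pos (Real.exp_pos _), h1φ, Real.log_exp,
          abs_neg, _root_.abs_of_pos hx.1, ← ENNReal.ofReal_mul (Real.exp_pos _).le,
          mul_comm, div_mul_cancel₀]
        exact (Real.exp_pos _).ne'
    _ ≤ ENNReal.ofReal ((Real.log δ⁻¹)^p / p) := by
        have hint : IntegrableOn (fun x : ℝ => x^(p-1)) (Ioo 0 T) := by
          have h := intervalIntegral.intervalIntegrable_rpow' (a := 0) (b := T)
            (by linarith : (-1:ℝ) < p-1)
          rw [intervalIntegrable_iff] at h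
          exact h.mono_set (by rw [uIoc_of_le hT0.le]; exact Ioo_subset_Ioc_self)
        have hnn : 0 ≤ᵐ[volume.restrict (Ioo (0:ℝ) T)] fun x : ℝ => x^(p-1) := by
          rw [EventuallyLE, ae_restrict_iff' measurableSet_Ioo]
          exact ae_of_all _ fun x hx => Real.rpow_nonneg hx.1.le _
        rw [← MeasureTheory.ofReal_integral_eq_lintegral_ofReal hint hnn]
        apply ENNReal.ofReal_le_ofReal
        have heq : ∫ x in Ioo (0:ℝ) T, x^(p-1) = ∫ x in (0:ℝ)..T, x^(p-1) := by
          rw [intervalIntegral.integral_of_le hT0.le, integral_Ioc_eq_integral_Ioo]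
        rw [heq, integral_rpow (Or.inl (by linarith : (-1:ℝ) < p-1))]
        rw [Real.zero_rpow (by linarith : p - 1 + 1 ≠ 0), sub_add_cancel]
        simp [hT]

lemma lintegral_comp_polarCoord_symm' (g : ℂ → ℝ≥0∞) (hg : Measurable g) :
    ∫⁻ z, g z = ∫⁻ p in polarCoord.target,
      ENNReal.ofReal p.1 * g (Complex.polarCoord.symm p) := by
  have hmp := Complex.volume_preserving_equiv_real_prod.symm
  have hemb : MeasurableEmbedding (Complex.measurableEquivRealProd.symm) :=
    Complex.measurableEquivRealProd.symm.measurableEmbedding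
  have step1 : ∫⁻ z, g z = ∫⁻ q : ℝ × ℝ, g (Complex.measurableEquivRealProd.symm q) :=
    (hmp.lintegral_comp_emb hemb g).symm
  set G : ℝ × ℝ → ℝ≥0∞ := fun q => g (Complex.measurableEquivRealProd.symm q) with hG
  set B : ℝ × ℝ → ℝ × ℝ →L[ℝ] ℝ × ℝ := fun p =>
    LinearMap.toContinuousLinearMap (Matrix.toLin (Module.Basis.finTwoProd ℝ) (Module.Basis.finTwoProd ℝ)
      !![Real.cos p.2, -p.1 * Real.sin p.2; Real.sin p.2, p.1 * Real.cos p.2]) with hB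
  have hBd : ∀ p ∈ polarCoord.target, HasFDerivWithinAt polarCoord.symm (B p)
      polarCoord.target p := fun p _ =>
    (hasFDerivAt_polarCoord_symm p).hasFDerivWithinAt
  have B_det : ∀ p, (B p).det = p.1 := by
    intro p
    conv_rhs => rw [← one_mul p.1, ← Real.cos_sq_add_sin_sq p.2]
    simp only [hB, neg_mul, LinearMap.det_toContinuousLinearMap, LinearMap.det_toLin,
      Matrix.det_fin_two_of, sub_neg_eq_add]
    ring
  have hinj : InjOn polarCoord.symm polarCoord.target := by
    have := polarCoord.symm.injOn
    rwa [OpenPartialHomeomorph.symm_source] at this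
  calc ∫⁻ z, g z = ∫⁻ q : ℝ × ℝ, G q := step1
    _ = ∫⁻ q in polarCoord.source, G q := by
        rw [← setLIntegral_univ]
        exact (setLIntegral_congr polarCoord_source_ae_eq_univ).symm
    _ = ∫⁻ q in polarCoord.symm '' polarCoord.target, G q := by
        rw [polarCoord.symm_image_target_eq_source]
    _ = ∫⁻ p in polarCoord.target, ENNReal.ofReal |(B p).det| * G (polarCoord.symm p) := by
        rw [lintegral_image_eq_lintegral_abs_det_fderiv_mul volume
          polarCoord.open_target.measurableSet hBd hinj]
    _ = ∫⁻ p in polarCoord.target, ENNReal.ofReal p.1 * g (Complex.polarCoord.symm p) := by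
        apply setLIntegral_congr_fun polarCoord.open_target.measurableSet
        intro p hp
        beta_reduce
        rw [B_det, _root_.abs_of_pos hp.1]
        rfl

end Aux

/-- If an inner function has finite `L^p` entropy (`log|f'| ∈ L^p(𝕋)`) then for each
`0 < c < 1` the integral `∫_{|f|<c} |log(1-|z|)|^{p-1}/(1-|z|) dA(z)` converges. -/
theorem sublevel_integral_of_finite_entropy
    (p c : ℝ) (hp : 0 < p) (hc0 : 0 < c) (hc1 : c < 1)
    (f : ℂ → ℂ) (hf : IsInner f) (F : ℝ → ℝ)
    (hF : ∀ᵐ θ ∂mT, HasAngularDeriv f (circlePoint θ) (F θ))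
    (hLp : MemLp (fun θ => Real.log (F θ)) (ENNReal.ofReal p) mT) :
    (∫⁻ z in {z : ℂ | ‖z‖ < 1 ∧ ‖f z‖ < c},
        ENNReal.ofReal (|Real.log (1 - ‖z‖)| ^ (p - 1) / (1 - ‖z‖)))
      < ⊤ := by
  obtain ⟨hd, hm', _⟩ := hf
  have hm : MapsTo f (ball (0:ℂ) 1) (ball (0:ℂ) 1) := hm'
  set π := Real.pi with hπdef
  have hπ : 0 < π := Real.pi_pos
  -- the weight function
  set K : ℝ → ℝ≥0∞ := fun r => ENNReal.ofReal (|Real.log (1 - r)| ^ (p - 1) / (1 - r)) with hK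
  have hKm : Measurable K := by
    apply ENNReal.measurable_ofReal.comp
    apply Measurable.div
    · exact (Real.measurable_log.comp (measurable_const.sub measurable_id)).abs.pow_const _
    · exact measurable_const.sub measurable_id
  -- the sublevel set
  set E : Set ℂ := ball (0:ℂ) 1 ∩ f ⁻¹' ball (0:ℂ) c with hE
  have hEopen : IsOpen E := hd.continuousOn.isOpen_inter_preimage isOpen_ball isOpen_ball
  have hset : {z : ℂ | ‖z‖ < 1 ∧ ‖f z‖ < c} = E := by
    ext z
    simp [hE, mem_ball_zero_iff]
  rw [hset]
  set g : ℂ → ℝ≥0∞ := E.indicator (fun z => K (‖z‖)) with hg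
  have hgm : Measurable g := (hKm.comp continuous_norm.measurable).indicator hEopen.measurableSet
  have hTeq : (∫⁻ z in E,
      ENNReal.ofReal (|Real.log (1 - ‖z‖)| ^ (p - 1) / (1 - ‖z‖)))
      = ∫⁻ z, g z := (lintegral_indicator hEopen.measurableSet _).symm
  rw [hTeq, lintegral_comp_polarCoord_symm' g hgm]
  -- circle point facts
  have hsymm : ∀ q : ℝ × ℝ, Complex.polarCoord.symm q = (q.1 : ℂ) * circlePoint q.2 := by
    intro q
    rw [Complex.polarCoord_symm_apply, circlePoint, Complex.exp_mul_I]
    norm_num [Complex.ofReal_cos, Complex.ofReal_sin]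
  have hcircle : ∀ θ : ℝ, ‖circlePoint θ‖ = 1 := by
    intro θ; rw [circlePoint, Complex.norm_exp]; simp
  -- the (r, θ) sublevel set and the product-side integrand
  set S : Set (ℝ × ℝ) :=
    {q | q.1 ∈ Ioo (0:ℝ) 1 ∧ ‖f ((q.1:ℂ) * circlePoint q.2)‖ < c} with hS
  have hSmeas : MeasurableSet S := by
    have hH : Continuous (fun q : ℝ × ℝ => (q.1 : ℂ) * circlePoint q.2) := by
      apply Continuous.mul (Complex.continuous_ofReal.comp continuous_fst)
      exact Complex.continuous_exp.comp
        ((Complex.continuous_ofReal.comp continuous_snd).mul continuous_const)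
    have hSeq : S = {q : ℝ × ℝ | q.1 ∈ Ioo (0:ℝ) 1}
        ∩ (fun q : ℝ × ℝ => (q.1:ℂ) * circlePoint q.2) ⁻¹' E := by
      ext q
      simp only [hS, mem_setOf_eq, mem_inter_iff, mem_preimage, hE, mem_ball_zero_iff]
      constructor
      · rintro ⟨hq1, hq2⟩
        refine ⟨hq1, ⟨?_, hq2⟩⟩
        rw [norm_mul, hcircle, mul_one, Complex.norm_real, Real.norm_eq_abs,
          _root_.abs_of_pos hq1.1]
        exact hq1.2
      · rintro ⟨hq1, _, hq2⟩
        exact ⟨hq1, hq2⟩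
    rw [hSeq]
    exact ((isOpen_Ioo.preimage continuous_fst).inter (hEopen.preimage hH)).measurableSet
  set W : Set (ℝ × ℝ) := {q : ℝ × ℝ | q.2 ∈ Ioo (-π) π} with hW
  have hWmeas : MeasurableSet W := measurable_snd measurableSet_Ioo
  set J : ℝ × ℝ → ℝ≥0∞ := (S ∩ W).indicator (fun q => K q.1) with hJ
  have hJm : Measurable J := (hKm.comp measurable_fst).indicator (hSmeas.inter hWmeas)
  -- pass from the polar integral to J
  have hstep : (∫⁻ q in polarCoord.target, ENNReal.ofReal q.1 * g (Complex.polarCoord.symm q))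
      ≤ ∫⁻ q, J q := by
    refine le_trans (setLIntegral_mono' polarCoord.open_target.measurableSet ?_)
      (setLIntegral_le_lintegral _ _)
    rintro q hq
    rw [polarCoord_target] at hq
    obtain ⟨hq1, hq2⟩ := hq
    by_cases hzE : Complex.polarCoord.symm q ∈ E
    · have habs : ‖Complex.polarCoord.symm q‖ = q.1 := by
        rw [hsymm, norm_mul, hcircle, mul_one, Complex.norm_real, Real.norm_eq_abs, _root_.abs_of_pos hq1]
      have h11 : q.1 < 1 := by
        have h := hzE.1
        rw [mem_ball_zero_iff, habs] at h
        exact h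
      have hfc : ‖f ((q.1:ℂ) * circlePoint q.2)‖ < c := by
        have h := hzE.2
        rw [mem_preimage, mem_ball_zero_iff, hsymm] at h
        exact h
      have hmem : q ∈ S ∩ W := ⟨⟨⟨hq1, h11⟩, hfc⟩, hq2⟩
      rw [hg, indicator_of_mem hzE, hJ, indicator_of_mem hmem, habs]
      calc ENNReal.ofReal q.1 * K q.1 ≤ 1 * K q.1 :=
            mul_le_mul_left (ENNReal.ofReal_le_one.2 h11.le) _
        _ = K q.1 := one_mul _
    · rw [hg, indicator_of_notMem hzE, mul_zero]
      exact zero_le'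
  -- Tonelli
  set H0 : ℝ → ℝ≥0∞ := fun θ => ∫⁻ r, S.indicator (fun q : ℝ × ℝ => K q.1) (r, θ) with hH0
  have hton : (∫⁻ q, J q) = ∫⁻ θ in Ioo (-π) π, H0 θ := by
    rw [Measure.volume_eq_prod, lintegral_prod_symm' J hJm,
      ← lintegral_indicator measurableSet_Ioo]
    apply lintegral_congr
    intro θ
    by_cases hθ : θ ∈ Ioo (-π) π
    · rw [indicator_of_mem hθ, hH0]
      apply lintegral_congr
      intro r
      rw [hJ]
      by_cases hrS : (r, θ) ∈ S
      · rw [indicator_of_mem (mem_inter hrS hθ), indicator_of_mem hrS]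
      · rw [indicator_of_notMem (fun hcc => hrS hcc.1), indicator_of_notMem hrS]
    · rw [indicator_of_notMem hθ]
      have hz : ∀ r : ℝ, J (r, θ) = 0 := fun r =>
        indicator_of_notMem (fun hcc => hθ hcc.2) _
      calc (∫⁻ r, J (r, θ)) = ∫⁻ _ : ℝ, 0 := lintegral_congr hz
        _ = 0 := lintegral_zero
  -- periodicity of H0
  have hper : ∀ θ : ℝ, H0 (θ + 2*π) = H0 θ := by
    intro θ
    apply lintegral_congr
    intro r
    have hcp : circlePoint (θ + 2*π) = circlePoint θ := by
      rw [circlePoint, circlePoint]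
      push_cast
      rw [add_mul, Complex.exp_add, Complex.exp_two_pi_mul_I, mul_one]
    have hiff : ((r, θ + 2*π) ∈ S) ↔ ((r, θ) ∈ S) := by
      simp only [hS, mem_setOf_eq, hcp]
    by_cases h : (r, θ) ∈ S
    · rw [indicator_of_mem (hiff.2 h), indicator_of_mem h]
    · rw [indicator_of_notMem (fun hh => h (hiff.1 hh)), indicator_of_notMem h]
  -- translation invariance
  have htrans : (∫⁻ θ in Ioo (-π) 0, H0 θ) = ∫⁻ θ in Ioo π (2*π), H0 θ := by
    rw [← lintegral_indicator measurableSet_Ioo, ← lintegral_indicator measurableSet_Ioo]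
    rw [← lintegral_add_right_eq_self ((Ioo (-π) (0:ℝ)).indicator H0) (-(2*π))]
    apply lintegral_congr
    intro θ
    by_cases h : θ ∈ Ioo π (2*π)
    · have h2 : θ + -(2*π) ∈ Ioo (-π) (0:ℝ) := ⟨by linarith [h.1], by linarith [h.2]⟩
      rw [indicator_of_mem h2, indicator_of_mem h]
      have e := hper (θ + -(2*π))
      have e2 : θ + -(2*π) + 2*π = θ := by ring
      rw [e2] at e
      exact e.symm
    · have h2 : θ + -(2*π) ∉ Ioo (-π) (0:ℝ) := by
        intro hh
        exact h ⟨by linarith [hh.1], by linarith [hh.2]⟩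
      rw [indicator_of_notMem h2, indicator_of_notMem h]
  -- moving to (0, 2π]
  have hsplit : (∫⁻ θ in Ioo (-π) π, H0 θ) ≤ ∫⁻ θ in Ioc 0 (2*π), H0 θ := by
    rw [← Ioo_union_Ico_eq_Ioo (by linarith : -π < (0:ℝ)) (by linarith : (0:ℝ) ≤ π)]
    rw [lintegral_union measurableSet_Ico (by
      rw [Set.disjoint_left]
      rintro x hx1 hx2
      exact absurd hx1.2 (not_lt.2 hx2.1))]
    have h1 : (∫⁻ θ in Ico (0:ℝ) π, H0 θ) = ∫⁻ θ in Ioc (0:ℝ) π, H0 θ :=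
      setLIntegral_congr Ico_ae_eq_Ioc
    rw [h1, htrans]
    have hdisj2 : Disjoint (Ioc (0:ℝ) π) (Ioo π (2*π)) := by
      rw [Set.disjoint_left]
      rintro x hx1 hx2
      exact absurd hx1.2 (not_le.2 hx2.1)
    rw [add_comm, ← lintegral_union measurableSet_Ioo hdisj2]
    apply lintegral_mono_set
    rintro x (h | h)
    · exact ⟨h.1, by linarith [h.2]⟩
    · exact ⟨by linarith [h.1], h.2.le⟩
  -- a.e. pointwise bound for H0 on (0, 2π]
  set C0 : ℝ := Real.log (2 / (1-c)) with hC0def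
  have h2c : (1:ℝ) < 2 / (1-c) := by
    rw [lt_div_iff₀ (by linarith)]; linarith
  have hC0 : 0 < C0 := Real.log_pos h2c
  have hone : (ENNReal.ofReal (2*π))⁻¹ ≠ 0 := ENNReal.inv_ne_zero.2 ENNReal.ofReal_ne_top
  have hFae : ∀ᵐ θ ∂(volume.restrict (Ioc (0:ℝ) (2*π))),
      HasAngularDeriv f (circlePoint θ) (F θ) := by
    have h := hF
    rw [show mT = (ENNReal.ofReal (2*π))⁻¹ • (volume.restrict (Ioc (0:ℝ) (2*π))) from rfl] at h
    exact (Measure.ae_ennreal_smul_measure_iff hone).1 h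
  have hmain : ∀ᵐ θ ∂(volume.restrict (Ioc (0:ℝ) (2*π))),
      H0 θ ≤ ENNReal.ofReal ((C0 + |Real.log (F θ)|)^p / p) := by
    filter_upwards [hFae] with θ hAD
    by_cases hne : ∃ r : ℝ, (r, θ) ∈ S
    · obtain ⟨r₀, ⟨hr₀0, hr₀1⟩, hr₀c⟩ := hne
      set L := F θ with hLdef
      have hab := angular_bound hd hm (hcircle θ) hAD hr₀0.le hr₀1
      have h1c : 1 - c < 2*(1-r₀)*L := by linarith [hab, hr₀c]
      have hL0 : 0 < L := by nlinarith
      have h2L : 1 - c < 2*L := by nlinarith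
      set δ := (1-c)/(2*L) with hδdef
      have hδ0 : 0 < δ := div_pos (by linarith) (by linarith)
      have hδ1 : δ < 1 := by rw [hδdef, div_lt_one (by linarith)]; linarith
      have hsub : ∀ r : ℝ, (r, θ) ∈ S → r ∈ Ioo (0:ℝ) (1 - δ) := by
        rintro r ⟨⟨hr0, hr1⟩, hrc⟩
        have hab' := angular_bound hd hm (hcircle θ) hAD hr0.le hr1
        have h1 : 1 - c < 2*(1-r)*L := by linarith [hab', hrc]
        refine ⟨hr0, ?_⟩
        have : δ < 1 - r := by
          rw [hδdef, div_lt_iff₀ (by linarith)]; nlinarith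
        linarith
      have hmono2 : H0 θ ≤ ∫⁻ r in Ioo (0:ℝ) (1-δ), K r := by
        rw [← lintegral_indicator measurableSet_Ioo]
        refine lintegral_mono fun r => ?_
        show S.indicator (fun q : ℝ × ℝ => K q.1) (r, θ) ≤ (Ioo (0:ℝ) (1-δ)).indicator K r
        by_cases h : (r, θ) ∈ S
        · rw [indicator_of_mem h, indicator_of_mem (hsub r h)]
        · rw [indicator_of_notMem h]
          exact zero_le'
      refine le_trans hmono2 (le_trans (L1 p hp hδ0 hδ1) ?_)
      apply ENNReal.ofReal_le_ofReal
      have hlog : Real.log δ⁻¹ = C0 + Real.log L := by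
        rw [hδdef, inv_div, Real.log_div (by positivity) (by linarith),
          Real.log_mul two_ne_zero (ne_of_gt hL0), hC0def,
          Real.log_div two_ne_zero (by linarith : (1:ℝ) - c ≠ 0)]
        ring
      have hlogpos : 0 < Real.log δ⁻¹ := Real.log_pos (by
        nlinarith [mul_inv_cancel₀ (ne_of_gt hδ0), inv_pos.2 hδ0])
      have hle : Real.log δ⁻¹ ≤ C0 + |Real.log L| := by
        rw [hlog]
        exact add_le_add_right (le_abs_self _) _
      have hr := Real.rpow_le_rpow hlogpos.le hle hp.le
      exact div_le_div_of_nonneg_right hr hp.le |>.trans_eq rfl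
    · push_neg at hne
      have hz : H0 θ = 0 := by
        show (∫⁻ r, S.indicator (fun q : ℝ × ℝ => K q.1) (r, θ)) = 0
        have hz' : ∀ r : ℝ, S.indicator (fun q : ℝ × ℝ => K q.1) (r, θ) = 0 := fun r =>
          indicator_of_notMem (hne r) _
        calc (∫⁻ r, S.indicator (fun q : ℝ × ℝ => K q.1) (r, θ)) = ∫⁻ _ : ℝ, 0 :=
              lintegral_congr hz'
          _ = 0 := lintegral_zero
      rw [hz]
      exact zero_le'
  -- finish: integrate the bound
  have hμfin : volume (Ioc (0:ℝ) (2*π)) < ⊤ := by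
    rw [Real.volume_Ioc]
    exact ENNReal.ofReal_lt_top
  have hLpfin : (∫⁻ θ in Ioc (0:ℝ) (2*π), ENNReal.ofReal (|Real.log (F θ)|^p)) < ⊤ := by
    have h2 := hLp.2
    rw [eLpNorm_eq_lintegral_rpow_enorm_toReal (by simpa using (ENNReal.ofReal_pos.2 hp).ne')
      ENNReal.ofReal_ne_top, ENNReal.toReal_ofReal hp.le] at h2
    have h3 : (∫⁻ θ, (‖Real.log (F θ)‖₊ : ℝ≥0∞) ^ p ∂mT) < ⊤ :=
      (ENNReal.rpow_lt_top_iff_of_pos (by positivity : 0 < 1/p)).1 h2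
    have h4 : (∫⁻ θ, (‖Real.log (F θ)‖₊ : ℝ≥0∞) ^ p ∂mT)
        = (ENNReal.ofReal (2*π))⁻¹ *
          ∫⁻ θ in Ioc (0:ℝ) (2*π), (‖Real.log (F θ)‖₊ : ℝ≥0∞) ^ p := by
      rw [show mT = (ENNReal.ofReal (2*π))⁻¹ • (volume.restrict (Ioc (0:ℝ) (2*π))) from rfl]
      exact lintegral_smul_measure _ _
    have h5 : (∫⁻ θ in Ioc (0:ℝ) (2*π), (‖Real.log (F θ)‖₊ : ℝ≥0∞) ^ p) < ⊤ := by
      by_contra htop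
      rw [not_lt, top_le_iff] at htop
      rw [h4, htop, ENNReal.mul_top hone] at h3
      exact absurd h3 (lt_irrefl _)
    have h6 : ∀ θ : ℝ, ENNReal.ofReal (|Real.log (F θ)|^p)
        = (‖Real.log (F θ)‖₊ : ℝ≥0∞) ^ p := by
      intro θ
      rw [← Real.norm_eq_abs, ← enorm_eq_nnnorm, ← ofReal_norm,
        ← ENNReal.ofReal_rpow_of_nonneg (norm_nonneg _) hp.le]
    simp_rw [h6]
    exact h5
  have hkey : ∀ x : ℝ, 0 ≤ x → (C0 + x)^p ≤ 2^p*C0^p + 2^p*x^p := by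
    intro x hx
    rcases le_total x C0 with h | h
    · calc (C0+x)^p ≤ (2*C0)^p := Real.rpow_le_rpow (by linarith) (by linarith) hp.le
        _ = 2^p*C0^p := Real.mul_rpow (by norm_num) hC0.le
        _ ≤ 2^p*C0^p + 2^p*x^p := le_add_of_nonneg_right (by positivity)
    · calc (C0+x)^p ≤ (2*x)^p := Real.rpow_le_rpow (by linarith) (by linarith) hp.le
        _ = 2^p*x^p := Real.mul_rpow (by norm_num) hx
        _ ≤ 2^p*C0^p + 2^p*x^p := le_add_of_nonneg_left (by positivity)
  have hbound2 : (∫⁻ θ in Ioc (0:ℝ) (2*π), ENNReal.ofReal ((C0 + |Real.log (F θ)|)^p / p))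
      ≤ (volume (Ioc (0:ℝ) (2*π))) * ENNReal.ofReal ((2:ℝ)^p * C0^p / p)
        + ENNReal.ofReal ((2:ℝ)^p / p) *
          ∫⁻ θ in Ioc (0:ℝ) (2*π), ENNReal.ofReal (|Real.log (F θ)|^p) := by
    have hptwise : ∀ θ : ℝ, ENNReal.ofReal ((C0 + |Real.log (F θ)|)^p / p)
        ≤ ENNReal.ofReal ((2:ℝ)^p * C0^p / p)
          + ENNReal.ofReal ((2:ℝ)^p / p) * ENNReal.ofReal (|Real.log (F θ)|^p) := by
      intro θ
      set x := |Real.log (F θ)| with hxdef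
      have hx : 0 ≤ x := abs_nonneg _
      calc ENNReal.ofReal ((C0+x)^p/p)
          ≤ ENNReal.ofReal ((2^p*C0^p + 2^p*x^p)/p) :=
            ENNReal.ofReal_le_ofReal (div_le_div_of_nonneg_right (hkey x hx) hp.le |>.trans_eq rfl)
        _ = ENNReal.ofReal (2^p*C0^p/p + (2^p/p)*x^p) := by ring_nf
        _ ≤ ENNReal.ofReal (2^p*C0^p/p) + ENNReal.ofReal ((2^p/p)*x^p) :=
            ENNReal.ofReal_add_le
        _ = ENNReal.ofReal (2^p*C0^p/p) + ENNReal.ofReal (2^p/p) * ENNReal.ofReal (x^p) := by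
            rw [ENNReal.ofReal_mul (by positivity)]
    calc (∫⁻ θ in Ioc (0:ℝ) (2*π), ENNReal.ofReal ((C0 + |Real.log (F θ)|)^p / p))
        ≤ ∫⁻ θ in Ioc (0:ℝ) (2*π), (ENNReal.ofReal ((2:ℝ)^p * C0^p / p)
          + ENNReal.ofReal ((2:ℝ)^p / p) * ENNReal.ofReal (|Real.log (F θ)|^p)) :=
          lintegral_mono hptwise
      _ = (volume (Ioc (0:ℝ) (2*π))) * ENNReal.ofReal ((2:ℝ)^p * C0^p / p)
          + ENNReal.ofReal ((2:ℝ)^p / p) *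
            ∫⁻ θ in Ioc (0:ℝ) (2*π), ENNReal.ofReal (|Real.log (F θ)|^p) := by
          rw [lintegral_add_left measurable_const, lintegral_const,
            lintegral_const_mul' _ _ ENNReal.ofReal_ne_top,
            Measure.restrict_apply_univ, mul_comm (ENNReal.ofReal ((2:ℝ)^p * C0^p / p))]
  calc (∫⁻ q in polarCoord.target, ENNReal.ofReal q.1 * g (Complex.polarCoord.symm q))
      ≤ ∫⁻ q, J q := hstep
    _ = ∫⁻ θ in Ioo (-π) π, H0 θ := hton
    _ ≤ ∫⁻ θ in Ioc 0 (2*π), H0 θ := hsplit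
    _ ≤ ∫⁻ θ in Ioc (0:ℝ) (2*π), ENNReal.ofReal ((C0 + |Real.log (F θ)|)^p / p) :=
        lintegral_mono_ae hmain
    _ ≤ (volume (Ioc (0:ℝ) (2*π))) * ENNReal.ofReal ((2:ℝ)^p * C0^p / p)
        + ENNReal.ofReal ((2:ℝ)^p / p) *
          ∫⁻ θ in Ioc (0:ℝ) (2*π), ENNReal.ofReal (|Real.log (F θ)|^p) := hbound2
    _ < ⊤ := by
        apply ENNReal.add_lt_top.2
        constructor
        · exact ENNReal.mul_lt_top hμfin ENNReal.ofReal_lt_top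
        · exact ENNReal.mul_lt_top ENNReal.ofReal_lt_top hLpfin
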